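/- Let X be a separable Banach space and let (x_i, f_i) be a locally shrinking Schauder frame of X with projection constant K. Then for every normalized block sequence (u_i) of (x_i) and every ε > 0, there is a subsequence (v_i) of (u_i) which is a basic sequence with basis constant at most K + ε; that is, for all natural numbers m ≤ n and all real scalars a_1, …, a_n, one has ‖Σ_{i=1}^m a_i v_i‖ ≤ (K + ε)‖Σ_{i=1}^n a_i v_i‖. -/

import Mathlib

/-! The partial-sum operators `P t = ∑_{j<t} f j ⊗ x j` have norm at most `K`, converge
strongly to the identity, and, because the frame is locally shrinking, send a block sequence
to `0` as its blocks move off to infinity. A gliding-hump choice of indices `φ` and cut-offs `q`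
then makes `P (q m)` act on `span (u ∘ φ)`, up to a summable error, like the projection onto the
first `m` vectors; measuring that error against the largest partial sum absorbs it into `ε`. -/

open Filter Topology

/-- `sup { |g z| : z ∈ span (x i : i ≥ n), ‖z‖ ≤ 1 }`. -/
noncomputable def tailSupX {X : Type*} [NormedAddCommGroup X] [NormedSpace ℝ X]
    (x : ℕ → X) (g : X →L[ℝ] ℝ) (n : ℕ) : ℝ :=
  sSup ((fun z : X => |g z|) ''
    {z | z ∈ Submodule.span ℝ (x '' {i | n ≤ i}) ∧ ‖z‖ ≤ 1})

/-- `u` is a normalized block sequence of `(x i)`. -/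
def IsNormalizedBlock {X : Type*} [NormedAddCommGroup X] [NormedSpace ℝ X]
    (x : ℕ → X) (u : ℕ → X) : Prop :=
  ∃ (m n : ℕ → ℕ) (a : ℕ → ℝ), (∀ k, m k ≤ n k) ∧ (∀ k, n k < m (k + 1)) ∧
    (∀ k, u k = ∑ i ∈ Finset.Icc (m k) (n k), a i • x i) ∧ ∀ k, ‖u k‖ = 1

open Finset

section GlidingHump

variable {E : Type*} [NormedAddCommGroup E]

lemma exists_gliding_hump (P : ℕ → E → E) (u : ℕ → E)
    (hPu : ∀ l, Tendsto (fun t => P t (u l)) atTop (𝓝 (u l)))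
    (hPu0 : ∀ t, Tendsto (fun l => P t (u l)) atTop (𝓝 0))
    (η : ℕ → ℝ) (hη : ∀ k, 0 < η k) :
    ∃ φ q : ℕ → ℕ, StrictMono φ ∧
      (∀ j m, j < m → ‖u (φ j) - P (q m) (u (φ j))‖ ≤ η m) ∧
      ∀ m k, m ≤ k → ‖P (q m) (u (φ k))‖ ≤ η k := by
  have eventually_close : ∀ p k, ∀ᶠ t in atTop, ∀ l ∈ Set.Iic p, ‖u l - P t (u l)‖ ≤ η k := by
    refine fun p k => (eventually_all_finite (Set.finite_Iic p)).2 fun l _ => ?_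
    have : Tendsto (fun t => ‖u l - P t (u l)‖) atTop (𝓝 0) := by
      simpa using ((hPu l).const_sub (u l)).norm
    exact this.eventually_le_const (hη k)
  have eventually_small : ∀ T k, ∀ᶠ l in atTop, ∀ t ∈ Set.Iic T, ‖P t (u l)‖ ≤ η k := by
    refine fun T k => (eventually_all_finite (Set.finite_Iic T)).2 fun t _ => ?_
    simpa using (hPu0 t).norm.eventually_le_const (by simpa using hη k)
  -- State `(φ k, q k)`: `q (k+1)` is taken after `φ k`, and `φ (k+1)` after `q (k+1)`.
  have step : ∀ k (s : ℕ × ℕ), ∃ s' : ℕ × ℕ, s.1 < s'.1 ∧ s.2 ≤ s'.2 ∧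
      (∀ l ≤ s.1, ‖u l - P s'.2 (u l)‖ ≤ η (k + 1)) ∧
      ∀ t ≤ s'.2, ‖P t (u s'.1)‖ ≤ η (k + 1) := by
    intro k s
    obtain ⟨t, hst, ht⟩ := ((eventually_ge_atTop s.2).and (eventually_close s.1 (k + 1))).exists
    obtain ⟨p, hsp, hp⟩ := ((eventually_gt_atTop s.1).and (eventually_small t (k + 1))).exists
    exact ⟨(p, t), hsp, hst, ht, hp⟩
  obtain ⟨p₀, hp₀⟩ := (eventually_small 0 0).exists
  choose F hF_fst hF_snd hF_proj hF_small using step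
  let g : ℕ → ℕ × ℕ := fun k => Nat.rec (p₀, 0) F k
  have hq : Monotone fun k => (g k).2 :=
    monotone_nat_of_le_succ fun k => hF_snd k (g k)
  have hsmall : ∀ k, ∀ t ≤ (g k).2, ‖P t (u (g k).1)‖ ≤ η k
    | 0 => hp₀
    | k + 1 => hF_small k (g k)
  have hφ : StrictMono fun k => (g k).1 :=
    strictMono_nat_of_lt_succ fun k => hF_fst k (g k)
  refine ⟨fun k => (g k).1, fun k => (g k).2, hφ, ?_, ?_⟩
  · intro j m hjm
    obtain ⟨k, rfl⟩ : ∃ k, m = k + 1 := ⟨m - 1, by omega⟩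
    exact hF_proj k (g k) _ (hφ.monotone (Nat.le_of_lt_succ hjm))
  · exact fun m k hmk => hsmall k _ (hq hmk)

end GlidingHump

section AlmostProjections

variable {X : Type*} [NormedAddCommGroup X] [NormedSpace ℝ X]

lemma norm_sum_range_le_of_almost_projections (P : ℕ → X →L[ℝ] X) {K δ A : ℝ}
    (hPK : ∀ t, ‖P t‖ ≤ K) (v : ℕ → X) (q : ℕ → ℕ)
    (hD1 : ∀ j m, j < m → ‖v j - P (q m) (v j)‖ ≤ δ / 2 ^ m)
    (hD2 : ∀ m k, m ≤ k → ‖P (q m) (v k)‖ ≤ δ / 2 ^ k)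
    (a : ℕ → ℝ) {m n : ℕ} (hmn : m ≤ n) (hA : ∀ i < n, |a i| ≤ A) (hA0 : 0 ≤ A) :
    ‖∑ i ∈ range m, a i • v i‖ ≤ K * ‖∑ i ∈ range n, a i • v i‖ + 3 * A * δ := by
  set Q := P (q m)
  have hδ : 0 ≤ δ := by simpa using (norm_nonneg _).trans (hD2 0 0 le_rfl)
  have hterm : ∀ i < n, ∀ (w : X) (c : ℝ), ‖w‖ ≤ c → ‖a i • w‖ ≤ A * c := fun i hi w c hw => by
    rw [norm_smul, Real.norm_eq_abs]
    exact mul_le_mul (hA i hi) hw (norm_nonneg w) hA0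
  have hsplit : ∑ i ∈ range m, a i • v i = Q (∑ i ∈ range n, a i • v i)
      - ∑ i ∈ Ico m n, a i • Q (v i) + ∑ i ∈ range m, a i • (v i - Q (v i)) := by
    simp only [← sum_range_add_sum_Ico _ hmn, map_add, map_sum, map_smul, smul_sub,
      sum_sub_distrib]
    abel
  have hhead : ‖Q (∑ i ∈ range n, a i • v i)‖ ≤ K * ‖∑ i ∈ range n, a i • v i‖ :=
    (Q.le_opNorm _).trans (mul_le_mul_of_nonneg_right (hPK _) (norm_nonneg _))
  have htail : ‖∑ i ∈ Ico m n, a i • Q (v i)‖ ≤ 2 * A * δ := calc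
    _ ≤ ∑ i ∈ Ico m n, A * (δ / 2 ^ i) := norm_sum_le_of_le _ fun i hi =>
          hterm i (mem_Ico.1 hi).2 _ _ (hD2 m i (mem_Ico.1 hi).1)
    _ = A * δ * ∑ i ∈ Ico m n, (1 / 2 : ℝ) ^ i := by
          rw [mul_sum]; exact sum_congr rfl fun i _ => by rw [one_div_pow]; ring
    _ ≤ A * δ * ∑ i ∈ range n, (1 / 2 : ℝ) ^ i := by
          gcongr
          exact fun i hi => mem_range.2 (mem_Ico.1 hi).2
    _ ≤ A * δ * 2 := by gcongr; exact sum_geometric_two_le n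
    _ = 2 * A * δ := by ring
  have herr : ‖∑ i ∈ range m, a i • (v i - Q (v i))‖ ≤ A * δ := calc
    _ ≤ ∑ i ∈ range m, A * (δ / 2 ^ m) := norm_sum_le_of_le _ fun i hi =>
          hterm i (by grind) _ _ (hD1 i m (mem_range.1 hi))
    _ = A * δ * (m / 2 ^ m) := by rw [sum_const, card_range, nsmul_eq_mul]; ring
    _ ≤ A * δ * 1 := by
          gcongr
          rw [div_le_one (by positivity)]
          exact_mod_cast m.lt_two_pow_self.le
    _ = A * δ := mul_one _
  calc ‖∑ i ∈ range m, a i • v i‖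
      ≤ ‖Q (∑ i ∈ range n, a i • v i)‖ + ‖∑ i ∈ Ico m n, a i • Q (v i)‖
        + ‖∑ i ∈ range m, a i • (v i - Q (v i))‖ := by
        rw [hsplit]; exact norm_add_le_of_le (norm_sub_le _ _) le_rfl
    _ ≤ K * ‖∑ i ∈ range n, a i • v i‖ + 3 * A * δ := by linarith

theorem exists_basic_subsequence_of_tendsto (P : ℕ → X →L[ℝ] X) {K : ℝ} (hPK : ∀ t, ‖P t‖ ≤ K)
    (u : ℕ → X) (hu : ∀ l, ‖u l‖ = 1)
    (hPu : ∀ l, Tendsto (fun t => P t (u l)) atTop (𝓝 (u l)))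
    (hPu0 : ∀ t, Tendsto (fun l => P t (u l)) atTop (𝓝 0)) {ε : ℝ} (hε : 0 < ε) :
    ∃ φ : ℕ → ℕ, StrictMono φ ∧ ∀ m n : ℕ, m ≤ n → ∀ a : ℕ → ℝ,
      ‖∑ i ∈ range m, a i • u (φ i)‖ ≤ (K + ε) * ‖∑ i ∈ range n, a i • u (φ i)‖ := by
  have hK : 0 ≤ K := (norm_nonneg _).trans (hPK 0)
  -- `6 δ = ε / (2 (K + ε))` is what turns `M ≤ K ‖S n‖ + 6 δ M` into `M ≤ (K + ε) ‖S n‖`.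
  set δ := ε / (12 * (K + ε))
  obtain ⟨φ, q, hφ, hD1, hD2⟩ := exists_gliding_hump (fun t => P t) u hPu hPu0
    (fun k => δ / 2 ^ k) fun k => by positivity
  refine ⟨φ, hφ, fun m n hmn a => ?_⟩
  set S : ℕ → X := fun j => ∑ i ∈ range j, a i • u (φ i)
  -- Normalise by the largest partial sum `M = ‖S m₀‖`, which bounds every coefficient by `2 M`.
  obtain ⟨m₀, hm₀, hM⟩ := exists_mem_eq_sup' nonempty_range_add_one fun j => ‖S j‖
  set M := (range (n + 1)).sup' nonempty_range_add_one fun j => ‖S j‖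
  have hSM : ∀ j ≤ n, ‖S j‖ ≤ M := fun j hj =>
    le_sup' (fun j => ‖S j‖) (mem_range.2 (Nat.lt_succ_of_le hj))
  have ha : ∀ i < n, |a i| ≤ 2 * M := fun i hi => calc
    |a i| = ‖S (i + 1) - S i‖ := by simp [S, sum_range_succ, norm_smul, hu]
    _ ≤ ‖S (i + 1)‖ + ‖S i‖ := norm_sub_le _ _
    _ ≤ 2 * M := by linarith [hSM (i + 1) hi, hSM i hi.le]
  have key : M ≤ K * ‖S n‖ + 3 * (2 * M) * δ := hM.le.trans <|
    norm_sum_range_le_of_almost_projections P hPK (u ∘ φ) q hD1 hD2 a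
      (Nat.le_of_lt_succ (mem_range.1 hm₀)) ha
      (by linarith [(norm_nonneg _).trans (hSM 0 n.zero_le)])
  have hMδ : 12 * (K + ε) * (6 * M * δ) = 6 * ε * M := by
    simp only [δ]; field_simp
  calc ‖S m‖ ≤ M := hSM m hmn
    _ ≤ (K + ε) * ‖S n‖ := by
      nlinarith [mul_le_mul_of_nonneg_left key (by positivity : 0 ≤ 12 * (K + ε)),
        mul_nonneg (mul_nonneg hε.le (by positivity : 0 ≤ K + ε)) (norm_nonneg (S n))]

end AlmostProjections

section Frame

variable {X : Type*} [NormedAddCommGroup X] [NormedSpace ℝ X]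

noncomputable def framePartialSum (f : ℕ → X →L[ℝ] ℝ) (x : ℕ → X) (t : ℕ) : X →L[ℝ] X :=
  ∑ j ∈ range t, (f j).smulRight (x j)

@[simp]
lemma framePartialSum_apply (f : ℕ → X →L[ℝ] ℝ) (x : ℕ → X) (t : ℕ) (y : X) :
    framePartialSum f x t y = ∑ j ∈ range t, f j y • x j := by
  simp [framePartialSum]

lemma norm_framePartialSum_le {f : ℕ → X →L[ℝ] ℝ} {x : ℕ → X} {K : ℝ}
    (hK : K ∈ upperBounds {r : ℝ | ∃ (v : X) (m n : ℕ), ‖v‖ ≤ 1 ∧ m ≤ n ∧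
      r = ‖∑ i ∈ Icc m n, f i v • x i‖}) (t : ℕ) :
    ‖framePartialSum f x t‖ ≤ K := by
  have hK0 : 0 ≤ K := hK ⟨0, 0, 0, by simp, le_rfl, by simp⟩
  refine ContinuousLinearMap.opNorm_le_of_unit_norm hK0 fun y hy => ?_
  rcases t with _ | s
  · simpa [framePartialSum] using hK0
  · exact hK ⟨y, 0, s, hy.le, s.zero_le, by simp [Nat.range_succ_eq_Icc_zero]⟩

lemma abs_apply_le_tailSupX (x : ℕ → X) (g : X →L[ℝ] ℝ) {N : ℕ} {z : X}
    (hz : z ∈ Submodule.span ℝ (x '' {i | N ≤ i})) (hz1 : ‖z‖ ≤ 1) :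
    |g z| ≤ tailSupX x g N := by
  refine le_csSup ⟨‖g‖, ?_⟩ ⟨z, ⟨hz, hz1⟩, rfl⟩
  rintro _ ⟨w, ⟨-, hw⟩, rfl⟩
  simpa using g.le_of_opNorm_le_of_le le_rfl hw

lemma tendsto_apply_of_tendsto_tailSupX {x : ℕ → X} {g : X →L[ℝ] ℝ}
    (hg : Tendsto (tailSupX x g) atTop (𝓝 0)) {z : ℕ → X} {N : ℕ → ℕ}
    (hN : Tendsto N atTop atTop) (hz : ∀ l, z l ∈ Submodule.span ℝ (x '' {i | N l ≤ i}))
    (hz1 : ∀ l, ‖z l‖ ≤ 1) :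
    Tendsto (fun l => g (z l)) atTop (𝓝 0) :=
  squeeze_zero_norm (fun l => abs_apply_le_tailSupX x g (hz l) (hz1 l)) (hg.comp hN)

namespace IsNormalizedBlock

variable {x u : ℕ → X}

lemma norm_eq_one (hu : IsNormalizedBlock x u) (l : ℕ) : ‖u l‖ = 1 := by
  obtain ⟨-, -, -, -, -, -, hu1⟩ := hu
  exact hu1 l

lemma exists_tendsto_mem_span (hu : IsNormalizedBlock x u) :
    ∃ N : ℕ → ℕ, Tendsto N atTop atTop ∧ ∀ l, u l ∈ Submodule.span ℝ (x '' {i | N l ≤ i}) := by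
  obtain ⟨m, n, a, hmn, hnm, hu, -⟩ := hu
  refine ⟨m, (strictMono_nat_of_lt_succ fun k => (hmn k).trans_lt (hnm k)).tendsto_atTop,
    fun l => (hu l).symm ▸ Submodule.sum_mem _ fun i hi => Submodule.smul_mem _ _ ?_⟩
  exact Submodule.subset_span ⟨i, (mem_Icc.1 hi).1, rfl⟩

lemma tendsto_framePartialSum_zero (hu : IsNormalizedBlock x u) {f : ℕ → X →L[ℝ] ℝ}
    (hshr : ∀ m, Tendsto (tailSupX x (f m)) atTop (𝓝 0)) (t : ℕ) :
    Tendsto (fun l => framePartialSum f x t (u l)) atTop (𝓝 0) := by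
  obtain ⟨N, hN, hmem⟩ := hu.exists_tendsto_mem_span
  simpa using tendsto_finsetSum (range t) fun j _ =>
    (tendsto_apply_of_tendsto_tailSupX (hshr j) hN hmem fun l => (hu.norm_eq_one l).le).smul_const
      (x j)

end IsNormalizedBlock

end Frame

theorem schauderFrame_block_basic_subsequence_general
    {X : Type*} [NormedAddCommGroup X] [NormedSpace ℝ X]
    (x : ℕ → X) (f : ℕ → X →L[ℝ] ℝ)
    (hframe : ∀ v : X,
      Tendsto (fun n => ∑ i ∈ Finset.range n, f i v • x i) atTop (𝓝 v))
    (hshr : ∀ m : ℕ, Tendsto (tailSupX x (f m)) atTop (𝓝 0))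
    (K : ℝ)
    (hK : IsLUB {r : ℝ | ∃ (v : X) (m n : ℕ), ‖v‖ ≤ 1 ∧ m ≤ n ∧
      r = ‖∑ i ∈ Finset.Icc m n, f i v • x i‖} K)
    (u : ℕ → X) (hu : IsNormalizedBlock x u) :
    ∀ ε > (0 : ℝ), ∃ φ : ℕ → ℕ, StrictMono φ ∧
      ∀ m n : ℕ, m ≤ n → ∀ a : ℕ → ℝ,
        ‖∑ i ∈ Finset.range m, a i • u (φ i)‖ ≤
          (K + ε) * ‖∑ i ∈ Finset.range n, a i • u (φ i)‖ := fun _ hε =>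
  exists_basic_subsequence_of_tendsto (framePartialSum f x) (norm_framePartialSum_le hK.1) u
    hu.norm_eq_one (fun l => by simpa using hframe (u l)) (hu.tendsto_framePartialSum_zero hshr) hε

/-- Let `X` be a separable Banach space and `(x i, f i)` a locally
shrinking Schauder frame of `X` with projection constant `K`. Then every normalized block
sequence `(u i)` of `(x i)` has, for every `ε > 0`, a subsequence `(v i) = (u (φ i))`
which is a basic sequence with basis constant at most `K + ε`. -/
theorem schauderFrame_block_basic_subsequence
    {X : Type*} [NormedAddCommGroup X] [NormedSpace ℝ X] [CompleteSpace X]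
    [TopologicalSpace.SeparableSpace X]
    (x : ℕ → X) (f : ℕ → X →L[ℝ] ℝ)
    (hx : ∀ i, x i ≠ 0) (hf : ∀ i, f i ≠ 0)
    (hframe : ∀ v : X,
      Tendsto (fun n => ∑ i ∈ Finset.range n, f i v • x i) atTop (𝓝 v))
    (hshr : ∀ m : ℕ, Tendsto (tailSupX x (f m)) atTop (𝓝 0))
    (K : ℝ)
    (hK : IsLUB {r : ℝ | ∃ (v : X) (m n : ℕ), ‖v‖ ≤ 1 ∧ m ≤ n ∧
      r = ‖∑ i ∈ Finset.Icc m n, f i v • x i‖} K)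
    (u : ℕ → X) (hu : IsNormalizedBlock x u) :
    ∀ ε > (0 : ℝ), ∃ φ : ℕ → ℕ, StrictMono φ ∧
      ∀ m n : ℕ, m ≤ n → ∀ a : ℕ → ℝ,
        ‖∑ i ∈ Finset.range m, a i • u (φ i)‖ ≤
          (K + ε) * ‖∑ i ∈ Finset.range n, a i • u (φ i)‖ :=
  schauderFrame_block_basic_subsequence_general x f hframe hshr K hK u hu
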